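/- arXiv:2605.15353 — 5 statements merged into one kernel-verified Lean document; each statement's English description precedes it below -/
import Mathlib

section
/- Let n ≥ 2, let θ : Fin n → ℝ, and let π be a random permutation of {1,…,n} distributed according to the Plackett-Luce distribution with logits θ. Then for any distinct indices i, j, the probability that i precedes j in π equals exp(θ_i) / (exp(θ_i) + exp(θ_j)); that is, Σ_{π : π⁻¹(i) < π⁻¹(j)} ∏_{k=1}^n exp(θ_{π_k}) / (Σ_{u=k}^n exp(θ_{π_u})) = exp(θ_i)/(exp(θ_i)+exp(θ_j)). -/
open Finset

/-- The Plackett-Luce probability of a permutation `π` of `{1,…,n}` (modeled as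
`Fin n`, where `π k` is the item ranked at position `k`) with logits `θ`:
`p(π|θ) = ∏_{k=1}^n exp(θ_{π_k}) / (Σ_{u=k}^n exp(θ_{π_u}))`. -/
noncomputable def plackettLuce {n : ℕ} (θ : Fin n → ℝ) (π : Equiv.Perm (Fin n)) : ℝ :=
  ∏ k : Fin n,
    Real.exp (θ (π k)) / ∑ u ∈ Finset.univ.filter (fun u => k ≤ u), Real.exp (θ (π u))

/-!
Condition on the item `a` ranked first: it is drawn with probability `exp θ a / ∑ u, exp θ u`,
and the rest of the ranking is again Plackett-Luce on the remaining items. If `a = i` then `i`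
precedes `j`, if `a = j` it does not, and otherwise, by induction on `n`, `i` precedes `j` with
probability `r = exp θ i / (exp θ i + exp θ j)`. Averaging over `a` gives `r` back, because
`exp θ i * (1 - r) = exp θ j * r`.
-/

open Equiv Equiv.Perm
open Real (exp exp_pos)

section

variable {n : ℕ}

theorem Equiv.Perm.decomposeFin_symm_symm_apply_swap_succ (a : Fin (n + 1)) (σ : Perm (Fin n))
    (x : Fin n) : (decomposeFin.symm (a, σ)).symm (swap 0 a x.succ) = (σ.symm x).succ := by
  rw [symm_apply_eq, decomposeFin_symm_apply_succ, apply_symm_apply]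

theorem Equiv.Perm.decomposeFin_symm_symm_apply_self (a : Fin (n + 1)) (σ : Perm (Fin n)) :
    (decomposeFin.symm (a, σ)).symm a = 0 := by
  rw [symm_apply_eq, decomposeFin_symm_apply_zero]

theorem Equiv.Perm.decomposeFin_symm_symm_apply_eq_zero_iff {a x : Fin (n + 1)}
    {σ : Perm (Fin n)} : (decomposeFin.symm (a, σ)).symm x = 0 ↔ x = a := by
  rw [symm_apply_eq, decomposeFin_symm_apply_zero]

theorem Fin.exists_swap_zero_succ_eq {a x : Fin (n + 1)} (hx : x ≠ a) :
    ∃ y : Fin n, swap 0 a y.succ = x := by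
  obtain ⟨y, hy⟩ := Fin.exists_succ_eq.mpr (show swap 0 a x ≠ 0 by simpa [swap_apply_eq_iff])
  exact ⟨y, by rw [hy, swap_apply_self]⟩

theorem sum_filter_eq_sum_decomposeFin {M : Type*} [AddCommMonoid M]
    (p : Perm (Fin (n + 1)) → Prop) [DecidablePred p] (f : Perm (Fin (n + 1)) → M) :
    ∑ π ∈ univ.filter p, f π =
      ∑ a, ∑ σ ∈ univ.filter (fun σ => p (decomposeFin.symm (a, σ))),
        f (decomposeFin.symm (a, σ)) := by
  simp_rw [sum_filter]
  rw [← decomposeFin.symm.sum_comp, Fintype.sum_prod_type]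

/-- Once `a` is ranked first, the remaining items are `swap 0 a v.succ` for `v : Fin n`. -/
theorem plackettLuce_decomposeFin_symm (θ : Fin (n + 1) → ℝ) (a : Fin (n + 1))
    (σ : Perm (Fin n)) :
    plackettLuce θ (decomposeFin.symm (a, σ)) =
      (exp (θ a) / ∑ u, exp (θ u)) * plackettLuce (fun v => θ (swap 0 a v.succ)) σ := by
  simp only [plackettLuce, Fin.prod_univ_succ, filter_le_eq_Ici, Ici_zero_eq_univ,
    Fin.sum_Ici_succ, decomposeFin_symm_apply_zero, decomposeFin_symm_apply_succ]
  rw [Equiv.sum_comp (decomposeFin.symm (a, σ)) fun u => exp (θ u)]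

theorem sum_plackettLuce_decomposeFin_symm (θ : Fin (n + 1) → ℝ) (a : Fin (n + 1))
    (s : Finset (Perm (Fin n))) :
    ∑ σ ∈ s, plackettLuce θ (decomposeFin.symm (a, σ)) =
      (exp (θ a) / ∑ u, exp (θ u)) * ∑ σ ∈ s, plackettLuce (fun v => θ (swap 0 a v.succ)) σ := by
  simp_rw [plackettLuce_decomposeFin_symm, mul_sum]

theorem sum_plackettLuce (θ : Fin n → ℝ) : ∑ π, plackettLuce θ π = 1 := by
  induction n with
  | zero => simp [plackettLuce]
  | succ n ih =>
    have hW : ∑ u, exp (θ u) ≠ 0 := (sum_pos (fun u _ => exp_pos (θ u)) univ_nonempty).ne'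
    rw [← decomposeFin.symm.sum_comp, Fintype.sum_prod_type]
    simp_rw [sum_plackettLuce_decomposeFin_symm, ih, mul_one, ← sum_div, div_self hW]

variable {a : Fin (n + 1)}

theorem filter_decomposeFin_symm_first_precedes {j : Fin (n + 1)} (hj : j ≠ a) :
    univ.filter (fun σ : Perm (Fin n) =>
      (decomposeFin.symm (a, σ)).symm a < (decomposeFin.symm (a, σ)).symm j) = univ := by
  simp [decomposeFin_symm_symm_apply_self, Fin.pos_iff_ne_zero,
    decomposeFin_symm_symm_apply_eq_zero_iff, hj]

theorem filter_decomposeFin_symm_precedes_first (i : Fin (n + 1)) :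
    univ.filter (fun σ : Perm (Fin n) =>
      (decomposeFin.symm (a, σ)).symm i < (decomposeFin.symm (a, σ)).symm a) = ∅ := by
  simp [decomposeFin_symm_symm_apply_self]

theorem filter_decomposeFin_symm_precedes_swap_succ (i j : Fin n) :
    univ.filter (fun σ : Perm (Fin n) =>
      (decomposeFin.symm (a, σ)).symm (swap 0 a i.succ) <
        (decomposeFin.symm (a, σ)).symm (swap 0 a j.succ)) =
      univ.filter (fun σ : Perm (Fin n) => σ.symm i < σ.symm j) := by
  simp only [decomposeFin_symm_symm_apply_swap_succ, Fin.succ_lt_succ_iff]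

end

theorem sum_mul_ite_ite_eq_mul_sum {ι : Type*} [Fintype ι] [DecidableEq ι] (e : ι → ℝ) {i j : ι}
    (hij : i ≠ j) {r : ℝ} (hr : r * (e i + e j) = e i) :
    ∑ a, e a * (if a = i then 1 else if a = j then 0 else r) = r * ∑ a, e a := by
  have hdev : ∑ a, e a * ((if a = i then 1 else if a = j then 0 else r) - r) = 0 := by
    rw [Fintype.sum_eq_add i j hij (fun a ha => by simp [ha.1, ha.2])]
    simp only [if_pos, if_neg hij.symm]
    linear_combination -hr
  simp only [mul_sub, sum_sub_distrib, ← sum_mul] at hdev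
  linarith

theorem plackettLuce_prob_precedes_general {n : ℕ} (θ : Fin n → ℝ)
    (i j : Fin n) (hij : i ≠ j) :
    ∑ π ∈ Finset.univ.filter (fun π : Equiv.Perm (Fin n) => π.symm i < π.symm j),
        plackettLuce θ π
      = Real.exp (θ i) / (Real.exp (θ i) + Real.exp (θ j)) := by
  induction n with
  | zero => exact i.elim0
  | succ n ih =>
    have first (a : Fin (n + 1)) :
        ∑ σ ∈ univ.filter (fun σ : Perm (Fin n) =>
            (decomposeFin.symm (a, σ)).symm i < (decomposeFin.symm (a, σ)).symm j),
          plackettLuce θ (decomposeFin.symm (a, σ)) =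
        (exp (θ a) / ∑ u, exp (θ u)) *
          (if a = i then 1 else if a = j then 0 else exp (θ i) / (exp (θ i) + exp (θ j))) := by
      rw [sum_plackettLuce_decomposeFin_symm]
      congr 1
      rcases eq_or_ne a i with rfl | hai
      · rw [filter_decomposeFin_symm_first_precedes hij.symm, sum_plackettLuce, if_pos rfl]
      rcases eq_or_ne a j with rfl | haj
      · rw [filter_decomposeFin_symm_precedes_first, sum_empty, if_neg hai, if_pos rfl]
      obtain ⟨i', rfl⟩ := Fin.exists_swap_zero_succ_eq hai.symm
      obtain ⟨j', rfl⟩ := Fin.exists_swap_zero_succ_eq haj.symm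
      rw [filter_decomposeFin_symm_precedes_swap_succ,
        ih _ _ _ (ne_of_apply_ne (fun v => swap 0 a v.succ) hij), if_neg hai, if_neg haj]
    have hpair : 0 < exp (θ i) + exp (θ j) := by positivity
    have hW : 0 < ∑ u, exp (θ u) := sum_pos (fun u _ => exp_pos (θ u)) univ_nonempty
    rw [sum_filter_eq_sum_decomposeFin, sum_congr rfl fun a _ => first a]
    simp_rw [div_mul_eq_mul_div]
    rw [← sum_div, sum_mul_ite_ite_eq_mul_sum _ hij (div_mul_cancel₀ _ hpair.ne'),
      mul_div_cancel_right₀ _ hW.ne']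

/-- Under the Plackett-Luce distribution with logits `θ`, for distinct `i j`,
the probability that `i` precedes `j` (i.e. `π⁻¹ i < π⁻¹ j`) equals
`exp θ i / (exp θ i + exp θ j)`. -/
theorem plackettLuce_prob_precedes {n : ℕ} (hn : 2 ≤ n) (θ : Fin n → ℝ)
    (i j : Fin n) (hij : i ≠ j) :
    ∑ π ∈ Finset.univ.filter (fun π : Equiv.Perm (Fin n) => π.symm i < π.symm j),
        plackettLuce θ π
      = Real.exp (θ i) / (Real.exp (θ i) + Real.exp (θ j)) :=
  plackettLuce_prob_precedes_general θ i j hij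
end

section
/- Let n ≥ 3, let θ : Fin n → ℝ, and let π be a random permutation of {1,…,n} distributed according to the Plackett-Luce distribution with logits θ. Then for any pairwise distinct indices i, j, k, the probability that both i precedes j and k precedes j in π equals Pr(i ≺ j) · Pr(k ≺ j) · (1 + exp(θ_j)/(exp(θ_i)+exp(θ_j)+exp(θ_k))), where Pr(i ≺ j) = exp(θ_i)/(exp(θ_i)+exp(θ_j)) and Pr(k ≺ j) = exp(θ_k)/(exp(θ_k)+exp(θ_j)). -/
open Finset

lemma exp_sum_pos {n : ℕ} (θ : Fin (n+1) → ℝ) : 0 < ∑ u, Real.exp (θ u) :=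
  Finset.sum_pos (fun u _ => Real.exp_pos _) ⟨0, Finset.mem_univ 0⟩

lemma filter_succ_le {n : ℕ} (t : Fin n) (g : Fin (n+1) → ℝ) :
    ∑ u ∈ Finset.univ.filter (fun u => t.succ ≤ u), g u
      = ∑ s ∈ Finset.univ.filter (fun s => t ≤ s), g s.succ := by
  rw [Finset.sum_filter, Finset.sum_filter, Fin.sum_univ_succ]
  simp [Fin.succ_le_succ_iff, Fin.le_zero_iff, Fin.succ_ne_zero]

lemma pl_decompose {n : ℕ} (θ : Fin (n+1) → ℝ) (p : Fin (n+1)) (τ : Equiv.Perm (Fin n)) :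
    plackettLuce θ (Equiv.Perm.decomposeFin.symm (p, τ))
      = Real.exp (θ p) / (∑ u, Real.exp (θ u))
        * plackettLuce (fun s => θ (Equiv.swap 0 p s.succ)) τ := by
  set σ := Equiv.Perm.decomposeFin.symm (p, τ) with hσ
  have hs : ∀ s : Fin n, σ s.succ = Equiv.swap 0 p (τ s).succ := fun s =>
    Equiv.Perm.decomposeFin_symm_apply_succ τ p s
  unfold plackettLuce
  rw [Fin.prod_univ_succ]
  congr 1
  · have h0 : σ 0 = p := Equiv.Perm.decomposeFin_symm_apply_zero p τ
    rw [h0]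
    congr 1
    have huniv : Finset.univ.filter (fun u : Fin (n+1) => (0:Fin (n+1)) ≤ u) = Finset.univ := by
      simp [Fin.zero_le]
    rw [huniv]
    exact Equiv.sum_comp σ fun u => Real.exp (θ u)
  · refine Finset.prod_congr rfl fun t _ => ?_
    rw [filter_succ_le, hs t]
    congr 1
    refine Finset.sum_congr rfl fun s _ => ?_
    rw [hs s]

lemma exists_succ_eq_swap {n : ℕ} {p a : Fin (n+1)} (ha : a ≠ p) :
    ∃ c : Fin n, Equiv.swap 0 p a = c.succ := by
  have h0 : Equiv.swap 0 p a ≠ 0 := by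
    intro h
    apply ha
    have := congrArg (Equiv.swap 0 p) h
    rwa [Equiv.swap_apply_self, Equiv.swap_apply_left] at this
  exact ⟨(Equiv.swap 0 p a).pred h0, (Fin.succ_pred _ h0).symm⟩

lemma symm_decomp_eq {n : ℕ} (p : Fin (n+1)) (τ : Equiv.Perm (Fin n))
    {a : Fin (n+1)} {c : Fin n} (hc : Equiv.swap 0 p a = c.succ) :
    (Equiv.Perm.decomposeFin.symm (p, τ)).symm a = (τ.symm c).succ := by
  rw [Equiv.symm_apply_eq, Equiv.Perm.decomposeFin_symm_apply_succ, Equiv.apply_symm_apply,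
    ← hc, Equiv.swap_apply_self]

lemma symm_decomp_self {n : ℕ} (p : Fin (n+1)) (τ : Equiv.Perm (Fin n)) :
    (Equiv.Perm.decomposeFin.symm (p, τ)).symm p = 0 := by
  rw [Equiv.symm_apply_eq, Equiv.Perm.decomposeFin_symm_apply_zero]

lemma theta'_eq {n : ℕ} (θ : Fin (n+1) → ℝ) (p : Fin (n+1)) {a : Fin (n+1)} {c : Fin n}
    (hc : Equiv.swap 0 p a = c.succ) :
    θ (Equiv.swap 0 p c.succ) = θ a := by rw [← hc, Equiv.swap_apply_self]

lemma pl_sum_one : ∀ (n : ℕ) (θ : Fin n → ℝ),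
    ∑ π : Equiv.Perm (Fin n), plackettLuce θ π = 1 := by
  intro n
  induction n with
  | zero =>
    intro θ
    rw [Fintype.sum_eq_single (1 : Equiv.Perm (Fin 0)) (fun π h => absurd (Subsingleton.elim π 1) h)]
    simp [plackettLuce]
  | succ m ih =>
    intro θ
    have hT := exp_sum_pos θ
    rw [← Equiv.sum_comp Equiv.Perm.decomposeFin.symm (plackettLuce θ), Fintype.sum_prod_type]
    calc ∑ p, ∑ τ, plackettLuce θ (Equiv.Perm.decomposeFin.symm (p, τ))
        = ∑ p : Fin (m+1), Real.exp (θ p) / (∑ u, Real.exp (θ u)) := by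
          refine Finset.sum_congr rfl fun p _ => ?_
          rw [Finset.sum_congr rfl fun τ _ => pl_decompose θ p τ, ← Finset.mul_sum, ih, mul_one]
      _ = 1 := by rw [← Finset.sum_div, div_self hT.ne']


lemma pl_pair : ∀ (n : ℕ) (θ : Fin n → ℝ) (i j : Fin n), i ≠ j →
    ∑ π ∈ Finset.univ.filter (fun π : Equiv.Perm (Fin n) => π.symm i < π.symm j),
      plackettLuce θ π = Real.exp (θ i) / (Real.exp (θ i) + Real.exp (θ j)) := by
  intro n
  induction n with
  | zero => intro θ i j _; exact i.elim0
  | succ m ih =>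
    intro θ i j hij
    have hT := exp_sum_pos θ
    rw [Finset.sum_filter, ← Equiv.sum_comp Equiv.Perm.decomposeFin.symm
      (fun π : Equiv.Perm (Fin (m+1)) => if π.symm i < π.symm j then plackettLuce θ π else 0),
      Fintype.sum_prod_type]
    have key : ∀ p : Fin (m+1),
        (∑ τ : Equiv.Perm (Fin m),
          if (Equiv.Perm.decomposeFin.symm (p, τ)).symm i
              < (Equiv.Perm.decomposeFin.symm (p, τ)).symm j
            then plackettLuce θ (Equiv.Perm.decomposeFin.symm (p, τ)) else 0)
        = if p = i then Real.exp (θ i) / (∑ u, Real.exp (θ u))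
          else if p = j then 0
          else Real.exp (θ p) / (∑ u, Real.exp (θ u))
            * (Real.exp (θ i) / (Real.exp (θ i) + Real.exp (θ j))) := by
      intro p
      by_cases hpi : p = i
      · subst hpi
        rw [if_pos rfl]
        obtain ⟨cj, hcj⟩ := exists_succ_eq_swap (Ne.symm hij)
        have : ∀ τ : Equiv.Perm (Fin m),
            (if (Equiv.Perm.decomposeFin.symm (p, τ)).symm p
                < (Equiv.Perm.decomposeFin.symm (p, τ)).symm j
              then plackettLuce θ (Equiv.Perm.decomposeFin.symm (p, τ)) else 0)
            = Real.exp (θ p) / (∑ u, Real.exp (θ u))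
              * plackettLuce (fun s => θ (Equiv.swap 0 p s.succ)) τ := by
          intro τ
          rw [symm_decomp_self, symm_decomp_eq p τ hcj, if_pos (Fin.succ_pos _), pl_decompose]
        rw [Finset.sum_congr rfl fun τ _ => this τ, ← Finset.mul_sum, pl_sum_one, mul_one]
      · by_cases hpj : p = j
        · subst hpj
          rw [if_neg hpi, if_pos rfl]
          refine Finset.sum_eq_zero fun τ _ => ?_
          rw [symm_decomp_self, if_neg (by exact fun h => Fin.not_lt_zero _ h)]
        · rw [if_neg hpi, if_neg hpj]
          obtain ⟨ci, hci⟩ := exists_succ_eq_swap (fun h => hpi h.symm)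
          obtain ⟨cj, hcj⟩ := exists_succ_eq_swap (fun h => hpj h.symm)
          have hcij : ci ≠ cj := by
            intro h
            apply hij
            have : Equiv.swap 0 p i = Equiv.swap 0 p j := by rw [hci, hcj, h]
            exact (Equiv.swap 0 p).injective this
          have step : ∀ τ : Equiv.Perm (Fin m),
              (if (Equiv.Perm.decomposeFin.symm (p, τ)).symm i
                  < (Equiv.Perm.decomposeFin.symm (p, τ)).symm j
                then plackettLuce θ (Equiv.Perm.decomposeFin.symm (p, τ)) else 0)
              = Real.exp (θ p) / (∑ u, Real.exp (θ u))
                * (if τ.symm ci < τ.symm cj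
                    then plackettLuce (fun s => θ (Equiv.swap 0 p s.succ)) τ else 0) := by
            intro τ
            rw [symm_decomp_eq p τ hci, symm_decomp_eq p τ hcj, pl_decompose, mul_ite, mul_zero]
            simp only [Fin.succ_lt_succ_iff]
          rw [Finset.sum_congr rfl fun τ _ => step τ, ← Finset.mul_sum, ← Finset.sum_filter,
            ih _ ci cj hcij]
          have e1 : Real.exp ((fun s => θ (Equiv.swap 0 p s.succ)) ci) = Real.exp (θ i) := by
            simp only []; rw [theta'_eq θ p hci]
          have e2 : Real.exp ((fun s => θ (Equiv.swap 0 p s.succ)) cj) = Real.exp (θ j) := by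
            simp only []; rw [theta'_eq θ p hcj]
          rw [e1, e2]
    rw [Finset.sum_congr rfl fun p _ => key p]
    -- now algebra over p
    have hsub : ({i, j} : Finset (Fin (m+1))) ⊆ Finset.univ := Finset.subset_univ _
    rw [← Finset.sum_sdiff hsub, Finset.sum_pair hij]
    rw [if_pos rfl, if_neg (Ne.symm hij), if_pos rfl]
    have hrest : ∑ p ∈ Finset.univ \ {i, j},
        (if p = i then Real.exp (θ i) / (∑ u, Real.exp (θ u))
          else if p = j then 0
          else Real.exp (θ p) / (∑ u, Real.exp (θ u))
            * (Real.exp (θ i) / (Real.exp (θ i) + Real.exp (θ j))))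
        = ((∑ u, Real.exp (θ u)) - (Real.exp (θ i) + Real.exp (θ j))) / (∑ u, Real.exp (θ u))
            * (Real.exp (θ i) / (Real.exp (θ i) + Real.exp (θ j))) := by
      have : ∀ p ∈ Finset.univ \ ({i, j} : Finset (Fin (m+1))),
          (if p = i then Real.exp (θ i) / (∑ u, Real.exp (θ u))
            else if p = j then 0
            else Real.exp (θ p) / (∑ u, Real.exp (θ u))
              * (Real.exp (θ i) / (Real.exp (θ i) + Real.exp (θ j))))
          = Real.exp (θ p) / (∑ u, Real.exp (θ u))
              * (Real.exp (θ i) / (Real.exp (θ i) + Real.exp (θ j))) := by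
        intro p hp
        simp only [Finset.mem_sdiff, Finset.mem_insert, Finset.mem_singleton] at hp
        rw [if_neg (fun h => hp.2 (Or.inl h)), if_neg (fun h => hp.2 (Or.inr h))]
      rw [Finset.sum_congr rfl this]
      calc ∑ p ∈ Finset.univ \ ({i, j} : Finset (Fin (m+1))),
            Real.exp (θ p) / (∑ u, Real.exp (θ u))
              * (Real.exp (θ i) / (Real.exp (θ i) + Real.exp (θ j)))
          = (∑ p ∈ Finset.univ \ ({i, j} : Finset (Fin (m+1))), Real.exp (θ p))
              * (Real.exp (θ i) / (Real.exp (θ i) + Real.exp (θ j)) / (∑ u, Real.exp (θ u))) := by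
            rw [Finset.sum_mul]; exact Finset.sum_congr rfl fun p _ => by ring
        _ = ((∑ u, Real.exp (θ u)) - (Real.exp (θ i) + Real.exp (θ j)))
              * (Real.exp (θ i) / (Real.exp (θ i) + Real.exp (θ j)) / (∑ u, Real.exp (θ u))) := by
            rw [Finset.sum_sdiff_eq_sub hsub, Finset.sum_pair hij]
        _ = ((∑ u, Real.exp (θ u)) - (Real.exp (θ i) + Real.exp (θ j))) / (∑ u, Real.exp (θ u))
              * (Real.exp (θ i) / (Real.exp (θ i) + Real.exp (θ j))) := by ring
    rw [hrest]
    have hAB : (0:ℝ) < Real.exp (θ i) + Real.exp (θ j) := by positivity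
    field_simp
    ring


lemma succ_swap_ne {n : ℕ} {p a b : Fin (n+1)} {ca cb : Fin n} (hab : a ≠ b)
    (hca : Equiv.swap 0 p a = ca.succ) (hcb : Equiv.swap 0 p b = cb.succ) : ca ≠ cb :=
  fun h => hab ((Equiv.swap 0 p).injective (by rw [hca, hcb, h]))

lemma pl_both : ∀ (n : ℕ) (θ : Fin n → ℝ) (i j k : Fin n), i ≠ j → i ≠ k → j ≠ k →
    ∑ π ∈ Finset.univ.filter
        (fun π : Equiv.Perm (Fin n) => π.symm i < π.symm j ∧ π.symm k < π.symm j),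
        plackettLuce θ π
      = (Real.exp (θ i) / (Real.exp (θ i) + Real.exp (θ j)))
          * (Real.exp (θ k) / (Real.exp (θ k) + Real.exp (θ j)))
          * (1 + Real.exp (θ j) / (Real.exp (θ i) + Real.exp (θ j) + Real.exp (θ k))) := by
  intro n
  induction n with
  | zero => intro θ i j k _ _ _; exact i.elim0
  | succ m ih =>
    intro θ i j k hij hik hjk
    have hT := exp_sum_pos θ
    set R := (Real.exp (θ i) / (Real.exp (θ i) + Real.exp (θ j)))
          * (Real.exp (θ k) / (Real.exp (θ k) + Real.exp (θ j)))
          * (1 + Real.exp (θ j) / (Real.exp (θ i) + Real.exp (θ j) + Real.exp (θ k))) with hR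
    rw [Finset.sum_filter, ← Equiv.sum_comp Equiv.Perm.decomposeFin.symm
      (fun π : Equiv.Perm (Fin (m+1)) =>
        if π.symm i < π.symm j ∧ π.symm k < π.symm j then plackettLuce θ π else 0),
      Fintype.sum_prod_type]
    have key : ∀ p : Fin (m+1),
        (∑ τ : Equiv.Perm (Fin m),
          if (Equiv.Perm.decomposeFin.symm (p, τ)).symm i
              < (Equiv.Perm.decomposeFin.symm (p, τ)).symm j
            ∧ (Equiv.Perm.decomposeFin.symm (p, τ)).symm k
              < (Equiv.Perm.decomposeFin.symm (p, τ)).symm j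
            then plackettLuce θ (Equiv.Perm.decomposeFin.symm (p, τ)) else 0)
        = if p = i then Real.exp (θ i) / (∑ u, Real.exp (θ u))
              * (Real.exp (θ k) / (Real.exp (θ k) + Real.exp (θ j)))
          else if p = j then 0
          else if p = k then Real.exp (θ k) / (∑ u, Real.exp (θ u))
              * (Real.exp (θ i) / (Real.exp (θ i) + Real.exp (θ j)))
          else Real.exp (θ p) / (∑ u, Real.exp (θ u)) * R := by
      intro p
      by_cases hpi : p = i
      · subst hpi
        rw [if_pos rfl]
        obtain ⟨cj, hcj⟩ := exists_succ_eq_swap (Ne.symm hij)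
        obtain ⟨ck, hck⟩ := exists_succ_eq_swap (Ne.symm hik)
        have hckj : ck ≠ cj := succ_swap_ne (Ne.symm hjk) hck hcj
        have step : ∀ τ : Equiv.Perm (Fin m),
            (if (Equiv.Perm.decomposeFin.symm (p, τ)).symm p
                < (Equiv.Perm.decomposeFin.symm (p, τ)).symm j
              ∧ (Equiv.Perm.decomposeFin.symm (p, τ)).symm k
                < (Equiv.Perm.decomposeFin.symm (p, τ)).symm j
              then plackettLuce θ (Equiv.Perm.decomposeFin.symm (p, τ)) else 0)
            = Real.exp (θ p) / (∑ u, Real.exp (θ u))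
              * (if τ.symm ck < τ.symm cj
                  then plackettLuce (fun s => θ (Equiv.swap 0 p s.succ)) τ else 0) := by
          intro τ
          rw [symm_decomp_self, symm_decomp_eq p τ hcj, symm_decomp_eq p τ hck, pl_decompose,
            mul_ite, mul_zero]
          simp only [Fin.succ_pos, true_and, Fin.succ_lt_succ_iff]
        rw [Finset.sum_congr rfl fun τ _ => step τ, ← Finset.mul_sum, ← Finset.sum_filter,
          pl_pair m _ ck cj hckj]
        have e1 : Real.exp ((fun s => θ (Equiv.swap 0 p s.succ)) ck) = Real.exp (θ k) := by
          simp only []; rw [theta'_eq θ p hck]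
        have e2 : Real.exp ((fun s => θ (Equiv.swap 0 p s.succ)) cj) = Real.exp (θ j) := by
          simp only []; rw [theta'_eq θ p hcj]
        rw [e1, e2]
      · by_cases hpj : p = j
        · subst hpj
          rw [if_neg hpi, if_pos rfl]
          refine Finset.sum_eq_zero fun τ _ => ?_
          rw [symm_decomp_self, if_neg (fun h => Fin.not_lt_zero _ h.1)]
        · by_cases hpk : p = k
          · subst hpk
            rw [if_neg hpi, if_neg hpj, if_pos rfl]
            obtain ⟨ci, hci⟩ := exists_succ_eq_swap hik
            obtain ⟨cj, hcj⟩ := exists_succ_eq_swap hjk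
            have hcij : ci ≠ cj := succ_swap_ne hij hci hcj
            have step : ∀ τ : Equiv.Perm (Fin m),
                (if (Equiv.Perm.decomposeFin.symm (p, τ)).symm i
                    < (Equiv.Perm.decomposeFin.symm (p, τ)).symm j
                  ∧ (Equiv.Perm.decomposeFin.symm (p, τ)).symm p
                    < (Equiv.Perm.decomposeFin.symm (p, τ)).symm j
                  then plackettLuce θ (Equiv.Perm.decomposeFin.symm (p, τ)) else 0)
                = Real.exp (θ p) / (∑ u, Real.exp (θ u))
                  * (if τ.symm ci < τ.symm cj
                      then plackettLuce (fun s => θ (Equiv.swap 0 p s.succ)) τ else 0) := by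
              intro τ
              rw [symm_decomp_self, symm_decomp_eq p τ hcj, symm_decomp_eq p τ hci, pl_decompose,
                mul_ite, mul_zero]
              simp only [Fin.succ_pos, and_true, Fin.succ_lt_succ_iff]
            rw [Finset.sum_congr rfl fun τ _ => step τ, ← Finset.mul_sum, ← Finset.sum_filter,
              pl_pair m _ ci cj hcij]
            have e1 : Real.exp ((fun s => θ (Equiv.swap 0 p s.succ)) ci) = Real.exp (θ i) := by
              simp only []; rw [theta'_eq θ p hci]
            have e2 : Real.exp ((fun s => θ (Equiv.swap 0 p s.succ)) cj) = Real.exp (θ j) := by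
              simp only []; rw [theta'_eq θ p hcj]
            rw [e1, e2]
          · rw [if_neg hpi, if_neg hpj, if_neg hpk]
            obtain ⟨ci, hci⟩ := exists_succ_eq_swap (fun h => hpi h.symm)
            obtain ⟨cj, hcj⟩ := exists_succ_eq_swap (fun h => hpj h.symm)
            obtain ⟨ck, hck⟩ := exists_succ_eq_swap (fun h => hpk h.symm)
            have hcij : ci ≠ cj := succ_swap_ne hij hci hcj
            have hcik : ci ≠ ck := succ_swap_ne hik hci hck
            have hcjk : cj ≠ ck := succ_swap_ne hjk hcj hck
            have step : ∀ τ : Equiv.Perm (Fin m),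
                (if (Equiv.Perm.decomposeFin.symm (p, τ)).symm i
                    < (Equiv.Perm.decomposeFin.symm (p, τ)).symm j
                  ∧ (Equiv.Perm.decomposeFin.symm (p, τ)).symm k
                    < (Equiv.Perm.decomposeFin.symm (p, τ)).symm j
                  then plackettLuce θ (Equiv.Perm.decomposeFin.symm (p, τ)) else 0)
                = Real.exp (θ p) / (∑ u, Real.exp (θ u))
                  * (if τ.symm ci < τ.symm cj ∧ τ.symm ck < τ.symm cj
                      then plackettLuce (fun s => θ (Equiv.swap 0 p s.succ)) τ else 0) := by
              intro τ
              rw [symm_decomp_eq p τ hci, symm_decomp_eq p τ hcj, symm_decomp_eq p τ hck,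
                pl_decompose, mul_ite, mul_zero]
              simp only [Fin.succ_lt_succ_iff]
            rw [Finset.sum_congr rfl fun τ _ => step τ, ← Finset.mul_sum, ← Finset.sum_filter,
              ih _ ci cj ck hcij hcik hcjk]
            have e1 : Real.exp ((fun s => θ (Equiv.swap 0 p s.succ)) ci) = Real.exp (θ i) := by
              simp only []; rw [theta'_eq θ p hci]
            have e2 : Real.exp ((fun s => θ (Equiv.swap 0 p s.succ)) cj) = Real.exp (θ j) := by
              simp only []; rw [theta'_eq θ p hcj]
            have e3 : Real.exp ((fun s => θ (Equiv.swap 0 p s.succ)) ck) = Real.exp (θ k) := by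
              simp only []; rw [theta'_eq θ p hck]
            rw [e1, e2, e3, ← hR]
    rw [Finset.sum_congr rfl fun p _ => key p]
    have hsub : ({i, j, k} : Finset (Fin (m+1))) ⊆ Finset.univ := Finset.subset_univ _
    have hinotjk : i ∉ ({j, k} : Finset (Fin (m+1))) := by simp [hij, hik]
    rw [← Finset.sum_sdiff hsub, Finset.sum_insert hinotjk, Finset.sum_pair hjk]
    rw [if_pos rfl, if_neg (Ne.symm hij), if_pos rfl,
      if_neg (Ne.symm hik), if_neg (Ne.symm hjk), if_pos rfl]
    have hrest : ∑ p ∈ Finset.univ \ ({i, j, k} : Finset (Fin (m+1))),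
        (if p = i then Real.exp (θ i) / (∑ u, Real.exp (θ u))
              * (Real.exp (θ k) / (Real.exp (θ k) + Real.exp (θ j)))
          else if p = j then 0
          else if p = k then Real.exp (θ k) / (∑ u, Real.exp (θ u))
              * (Real.exp (θ i) / (Real.exp (θ i) + Real.exp (θ j)))
          else Real.exp (θ p) / (∑ u, Real.exp (θ u)) * R)
        = ((∑ u, Real.exp (θ u))
            - (Real.exp (θ i) + (Real.exp (θ j) + Real.exp (θ k)))) / (∑ u, Real.exp (θ u)) * R := by
      have hcongr : ∀ p ∈ Finset.univ \ ({i, j, k} : Finset (Fin (m+1))),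
          (if p = i then Real.exp (θ i) / (∑ u, Real.exp (θ u))
                * (Real.exp (θ k) / (Real.exp (θ k) + Real.exp (θ j)))
            else if p = j then 0
            else if p = k then Real.exp (θ k) / (∑ u, Real.exp (θ u))
                * (Real.exp (θ i) / (Real.exp (θ i) + Real.exp (θ j)))
            else Real.exp (θ p) / (∑ u, Real.exp (θ u)) * R)
          = Real.exp (θ p) / (∑ u, Real.exp (θ u)) * R := by
        intro p hp
        simp only [Finset.mem_sdiff, Finset.mem_insert, Finset.mem_singleton] at hp
        rw [if_neg (fun h => hp.2 (Or.inl h)), if_neg (fun h => hp.2 (Or.inr (Or.inl h))),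
          if_neg (fun h => hp.2 (Or.inr (Or.inr h)))]
      rw [Finset.sum_congr rfl hcongr]
      calc ∑ p ∈ Finset.univ \ ({i, j, k} : Finset (Fin (m+1))),
            Real.exp (θ p) / (∑ u, Real.exp (θ u)) * R
          = (∑ p ∈ Finset.univ \ ({i, j, k} : Finset (Fin (m+1))), Real.exp (θ p))
              * (R / (∑ u, Real.exp (θ u))) := by
            rw [Finset.sum_mul]; exact Finset.sum_congr rfl fun p _ => by ring
        _ = ((∑ u, Real.exp (θ u)) - (Real.exp (θ i) + (Real.exp (θ j) + Real.exp (θ k))))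
              * (R / (∑ u, Real.exp (θ u))) := by
            rw [Finset.sum_sdiff_eq_sub hsub, Finset.sum_insert hinotjk, Finset.sum_pair hjk]
        _ = ((∑ u, Real.exp (θ u)) - (Real.exp (θ i) + (Real.exp (θ j) + Real.exp (θ k))))
              / (∑ u, Real.exp (θ u)) * R := by ring
    rw [hrest, hR]
    have hAB : (0:ℝ) < Real.exp (θ i) + Real.exp (θ j) := by positivity
    have hCB : (0:ℝ) < Real.exp (θ k) + Real.exp (θ j) := by positivity
    have hS : (0:ℝ) < Real.exp (θ i) + Real.exp (θ j) + Real.exp (θ k) := by positivity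
    field_simp
    ring

/-- Under the Plackett-Luce distribution with logits `θ`, for pairwise distinct
`i j k`, the probability that both `i` precedes `j` and `k` precedes `j` equals
`Pr(i ≺ j) · Pr(k ≺ j) · (1 + exp θ j / (exp θ i + exp θ j + exp θ k))`, where
`Pr(i ≺ j) = exp θ i / (exp θ i + exp θ j)` and
`Pr(k ≺ j) = exp θ k / (exp θ k + exp θ j)`. -/
theorem plackettLuce_prob_both_precede {n : ℕ} (hn : 3 ≤ n) (θ : Fin n → ℝ)
    (i j k : Fin n) (hij : i ≠ j) (hik : i ≠ k) (hjk : j ≠ k) :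
    ∑ π ∈ Finset.univ.filter
        (fun π : Equiv.Perm (Fin n) => π.symm i < π.symm j ∧ π.symm k < π.symm j),
        plackettLuce θ π
      = (Real.exp (θ i) / (Real.exp (θ i) + Real.exp (θ j)))
          * (Real.exp (θ k) / (Real.exp (θ k) + Real.exp (θ j)))
          * (1 + Real.exp (θ j) / (Real.exp (θ i) + Real.exp (θ j) + Real.exp (θ k))) :=
  pl_both n θ i j k hij hik hjk
end

section
/- Let n ≥ 1 and suppose v ∈ ℝⁿ satisfies Σ_{i=1}^n v_i = 0 and 1 − i ≤ v_i ≤ 1 for all i ∈ {1,…,n}. Then Σ_{i=1}^n v_i² ≤ n(n−1). Moreover this bound is tight: the vector v = (1, 1, …, 1, 1−n) satisfies both constraints and achieves Σ_{i=1}^n v_i² = n(n−1). -/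
open Finset

/-- If `v ∈ ℝⁿ` has zero sum and satisfies `1 − i ≤ v_i ≤ 1` for every one-based
position `i` (here `i = (i : ℕ) + 1` for `i : Fin n`), then `Σ_i v_i² ≤ n(n−1)`.
Moreover the bound is tight: the vector `(1, 1, …, 1, 1−n)` satisfies both
constraints and achieves `Σ_i v_i² = n(n−1)`. -/
theorem zero_sum_score_norm_bound {n : ℕ} (hn : 1 ≤ n) (v : Fin n → ℝ)
    (hsum : ∑ i : Fin n, v i = 0)
    (hbound : ∀ i : Fin n, 1 - (((i : ℕ) : ℝ) + 1) ≤ v i ∧ v i ≤ 1) :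
    (∑ i : Fin n, v i ^ 2 ≤ (n : ℝ) * ((n : ℝ) - 1))
    ∧ (∑ i : Fin n, (if (i : ℕ) = n - 1 then 1 - (n : ℝ) else 1) = 0)
    ∧ (∀ i : Fin n,
        1 - (((i : ℕ) : ℝ) + 1) ≤ (if (i : ℕ) = n - 1 then 1 - (n : ℝ) else 1)
        ∧ (if (i : ℕ) = n - 1 then 1 - (n : ℝ) else (1 : ℝ)) ≤ 1)
    ∧ (∑ i : Fin n, (if (i : ℕ) = n - 1 then 1 - (n : ℝ) else 1) ^ 2
        = (n : ℝ) * ((n : ℝ) - 1)) := by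
  have hn' : (1 : ℝ) ≤ (n : ℝ) := by exact_mod_cast hn
  have hsplit : ∀ (a : ℝ),
      ∑ i : Fin n, (if (i : ℕ) = n - 1 then a else 1) = a + ((n : ℝ) - 1) := by
    intro a
    set e : Fin n := ⟨n - 1, by omega⟩ with he
    rw [← Finset.add_sum_erase _ _ (mem_univ e)]
    have h1 : (if ((e : Fin n) : ℕ) = n - 1 then a else 1) = a := by simp [he]
    have h2 : ∑ i ∈ univ.erase e, (if (i : ℕ) = n - 1 then a else 1)
        = ∑ i ∈ univ.erase e, (1 : ℝ) := by
      apply Finset.sum_congr rfl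
      intro i hi
      have hne : i ≠ e := (Finset.mem_erase.mp hi).1
      have : (i : ℕ) ≠ n - 1 := by
        intro h
        apply hne
        apply Fin.ext
        simp [he, h]
      simp [this]
    rw [h1, h2, Finset.sum_const]
    have : (univ.erase e).card = n - 1 := by
      rw [Finset.card_erase_of_mem (mem_univ e), Finset.card_univ, Fintype.card_fin]
    rw [this]
    have : ((n - 1 : ℕ) : ℝ) = (n : ℝ) - 1 := by
      have : (1:ℕ) ≤ n := hn
      push_cast [this]
      ring
    simp [this]
  refine ⟨?_, ?_, ?_, ?_⟩
  · have key : ∀ i : Fin n, v i ^ 2 ≤ (2 - (n : ℝ)) * v i + ((n : ℝ) - 1) := by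
      intro i
      obtain ⟨hl, hu⟩ := hbound i
      have hi : ((i : ℕ) : ℝ) + 1 ≤ (n : ℝ) := by
        have := i.isLt
        exact_mod_cast Nat.succ_le_of_lt this
      have hl' : 1 - (n : ℝ) ≤ v i := by linarith
      nlinarith [mul_nonneg (sub_nonneg.mpr hu) (sub_nonneg.mpr hl')]
    calc ∑ i : Fin n, v i ^ 2
        ≤ ∑ i : Fin n, ((2 - (n : ℝ)) * v i + ((n : ℝ) - 1)) :=
          Finset.sum_le_sum fun i _ => key i
      _ = (2 - (n : ℝ)) * (∑ i : Fin n, v i) + (n : ℝ) * ((n : ℝ) - 1) := by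
          rw [Finset.sum_add_distrib, ← Finset.mul_sum, Finset.sum_const,
            Finset.card_univ, Fintype.card_fin, nsmul_eq_mul]
      _ = (n : ℝ) * ((n : ℝ) - 1) := by rw [hsum]; ring
  · rw [hsplit]; ring
  · intro i
    obtain ⟨k, hk⟩ := i
    by_cases h : k = n - 1
    · have hk' : ((k : ℕ) : ℝ) + 1 = (n : ℝ) := by
        subst h
        have : n - 1 + 1 = n := by omega
        exact_mod_cast congrArg (Nat.cast : ℕ → ℝ) this
      simp only [h, if_pos rfl]
      constructor <;> simp_all <;> linarith
    · simp only [h, if_neg h]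
      constructor
      · have : (0 : ℝ) ≤ ((k : ℕ) : ℝ) := by positivity
        simp; linarith
      · simp
  · have h4 : ∑ i : Fin n, (if (i : ℕ) = n - 1 then 1 - (n : ℝ) else 1) ^ 2
        = ∑ i : Fin n, (if (i : ℕ) = n - 1 then (1 - (n : ℝ)) ^ 2 else 1) :=
      Finset.sum_congr rfl fun i _ => by split <;> norm_num
    rw [h4, hsplit]
    ring
end

section
/- Let n ≥ 1, θ : Fin n → ℝ, and let π be any permutation of {1,…,n}. The squared Euclidean norm of the Plackett-Luce score vector is uniformly bounded: Σ_{i=1}^n G_i(π)² ≤ n(n−1), where G_i(π) = 1 − Σ_{k=1}^{i} exp(θ_{π_i}) / (Σ_{u=k}^n exp(θ_{π_u})). -/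
open Finset

/-- The Plackett-Luce score component at rank position `i` (in the coordinates
reordered by `π`): `G_i(π) = 1 − Σ_{k=1}^{i} exp(θ_{π_i}) / (Σ_{u=k}^n exp(θ_{π_u}))`. -/
noncomputable def plScore {n : ℕ} (θ : Fin n → ℝ) (π : Equiv.Perm (Fin n)) (i : Fin n) : ℝ :=
  1 - ∑ k ∈ Finset.univ.filter (fun k => k ≤ i),
        Real.exp (θ (π i)) / ∑ u ∈ Finset.univ.filter (fun u => k ≤ u), Real.exp (θ (π u))

/-! Each score component is `1` minus at most `n` ratios in `[0, 1]`, so it lies in `[1 - n, 1]`,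
and the components sum to `0`, since after swapping the two sums each tail sum
`∑_{u ≥ k} exp θ_{π u}` is divided by itself exactly once. A centred family with values in
`[a, b]` has squared norm at most `-a b` times its size, which here is `(n - 1) n`. -/

/-- Bhatia–Davis for a centred family: sum `(f i - a) (b - f i) ≥ 0` gives it. -/
theorem sum_sq_le_of_sum_eq_zero {ι : Type*} (s : Finset ι) (f : ι → ℝ) {a b : ℝ}
    (ha : ∀ i ∈ s, a ≤ f i) (hb : ∀ i ∈ s, f i ≤ b) (hsum : ∑ i ∈ s, f i = 0) :
    ∑ i ∈ s, f i ^ 2 ≤ -(a * b) * s.card :=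
  calc ∑ i ∈ s, f i ^ 2
      ≤ ∑ i ∈ s, ((a + b) * f i - a * b) :=
        sum_le_sum fun i hi => by
          nlinarith [mul_nonneg (sub_nonneg.2 (ha i hi)) (sub_nonneg.2 (hb i hi))]
    _ = -(a * b) * s.card := by
        rw [sum_sub_distrib, ← mul_sum, hsum, sum_const, nsmul_eq_mul]; ring

section RankScore

variable {ι : Type*} [Fintype ι] [Preorder ι] [DecidableLE ι]

noncomputable def rankScore (w : ι → ℝ) (i : ι) : ℝ :=
  1 - ∑ k ∈ univ.filter (fun k => k ≤ i), w i / ∑ u ∈ univ.filter (fun u => k ≤ u), w u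

theorem rankScore_le_one {w : ι → ℝ} (hw : ∀ i, 0 ≤ w i) (i : ι) : rankScore w i ≤ 1 :=
  sub_le_self _ <| sum_nonneg fun _ _ => div_nonneg (hw i) (sum_nonneg fun u _ => hw u)

theorem one_sub_card_le_rankScore {w : ι → ℝ} (hw : ∀ i, 0 ≤ w i) (i : ι) :
    1 - (Fintype.card ι : ℝ) ≤ rankScore w i := by
  have hterm : ∀ k ∈ univ.filter (fun k => k ≤ i),
      w i / ∑ u ∈ univ.filter (fun u => k ≤ u), w u ≤ 1 := fun k hk =>
    div_le_one_of_le₀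
      (single_le_sum (fun u _ => hw u) (mem_filter.2 ⟨mem_univ i, (mem_filter.1 hk).2⟩))
      (sum_nonneg fun u _ => hw u)
  have hcard : ((univ.filter (fun k => k ≤ i)).card : ℝ) ≤ Fintype.card ι := by
    exact_mod_cast card_le_univ _
  have hsum := (sum_le_card_nsmul _ _ 1 hterm).trans ((nsmul_one _).trans_le hcard)
  unfold rankScore
  linarith

theorem sum_rankScore {w : ι → ℝ} (hw : ∀ i, 0 < w i) : ∑ i, rankScore w i = 0 := by
  have htail : ∀ k : ι, 0 < ∑ u ∈ univ.filter (fun u => k ≤ u), w u := fun k =>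
    sum_pos (fun u _ => hw u) ⟨k, mem_filter.2 ⟨mem_univ k, le_rfl⟩⟩
  have hswap : ∑ i, ∑ k ∈ univ.filter (fun k => k ≤ i),
      w i / ∑ u ∈ univ.filter (fun u => k ≤ u), w u = Fintype.card ι := by
    rw [sum_comm' (t' := univ) (s' := fun k => univ.filter (fun u => k ≤ u)) (by simp)]
    simp_rw [← sum_div, div_self (htail _).ne', sum_const, card_univ, nsmul_one]
  simp only [rankScore, sum_sub_distrib, hswap, sum_const, card_univ, nsmul_one, sub_self]

end RankScore

theorem plScore_sq_norm_le_general {n : ℕ} (θ : Fin n → ℝ)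
    (π : Equiv.Perm (Fin n)) :
    ∑ i : Fin n, plScore θ π i ^ 2 ≤ (n : ℝ) * ((n : ℝ) - 1) := by
  set w : Fin n → ℝ := fun i => Real.exp (θ (π i))
  have hw : ∀ i, 0 < w i := fun i => Real.exp_pos _
  have hscore : plScore θ π = rankScore w := rfl
  have hbound := sum_sq_le_of_sum_eq_zero univ (rankScore w)
    (fun i _ => one_sub_card_le_rankScore (fun j => (hw j).le) i)
    (fun i _ => rankScore_le_one (fun j => (hw j).le) i) (sum_rankScore hw)
  rw [hscore]
  simp only [card_univ, Fintype.card_fin] at hbound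
  linarith

/-- Uniform bound on the squared Euclidean norm of the Plackett-Luce score
vector: `Σ_{i=1}^n G_i(π)² ≤ n(n−1)` for every permutation `π`. -/
theorem plScore_sq_norm_le {n : ℕ} (hn : 1 ≤ n) (θ : Fin n → ℝ)
    (π : Equiv.Perm (Fin n)) :
    ∑ i : Fin n, plScore θ π i ^ 2 ≤ (n : ℝ) * ((n : ℝ) - 1) :=
  plScore_sq_norm_le_general θ π
end

section
/- Let n ≥ 2, let θ : Fin n → ℝ, and let π be a random permutation of {1,…,n} distributed according to the Plackett-Luce distribution with logits θ. Then for any distinct indices i, j, conditioned on the event that the first-ranked item π_1 is neither i nor j, the probability that i precedes j equals exp(θ_i)/(exp(θ_i)+exp(θ_j)); moreover the probability that π_1 ∉ {i, j} equals (Z − exp(θ_i) − exp(θ_j))/Z, where Z = Σ_{k=1}^n exp(θ_k). -/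
open Finset

/-!
Conditioning on the first-ranked item `p` factorizes the Plackett-Luce probability as
`e^{θ_p}/Z` times the Plackett-Luce probability of the ranking of the remaining items under
their own logits. Hence `Pr(π_1 ∉ {i,j}) = Σ_{p ∉ {i,j}} e^{θ_p}/Z`, and given `π_1 = p ∉ {i,j}`
the relative order of `i` and `j` is that of a Plackett-Luce ranking of the other `n - 1`
items. There `i` precedes `j` with probability `e^{θ_i}/(e^{θ_i}+e^{θ_j})`, by induction on `n`:
conditioning on the first item gives `1` if it is `i`, `0` if it is `j`, and the inductive
value otherwise, and these average to the same ratio.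
-/

open Equiv Equiv.Perm
open Real (exp exp_pos)

theorem Fin.sum_filter_succ_le {M : Type*} [AddCommMonoid M] {n : ℕ} (k : Fin n)
    (f : Fin (n + 1) → M) :
    ∑ u ∈ univ.filter (k.succ ≤ ·), f u = ∑ u ∈ univ.filter (k ≤ ·), f u.succ := by
  simp [sum_filter, Fin.sum_univ_succ, Fin.succ_le_succ_iff]

theorem Finset.sum_filter_ne_and_ne {α M : Type*} [Fintype α] [DecidableEq α] [AddCommGroup M]
    {i j : α} (hij : i ≠ j) (f : α → M) :
    ∑ x ∈ univ.filter (fun x => x ≠ i ∧ x ≠ j), f x = ∑ x, f x - f i - f j := by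
  have hfilter : univ.filter (fun x => x ≠ i ∧ x ≠ j) = (univ.erase i).erase j := by
    ext x; simp [and_comm]
  rw [hfilter, sum_erase_eq_sub (mem_erase.mpr ⟨hij.symm, mem_univ j⟩),
    sum_erase_eq_sub (mem_univ i)]

namespace Equiv.Perm

variable {n : ℕ}

theorem decomposeFin_symm_symm_apply_eq_zero_iff_s16 {p x : Fin (n + 1)} (e : Perm (Fin n)) :
    (decomposeFin.symm (p, e)).symm x = 0 ↔ x = p := by
  rw [Equiv.symm_apply_eq, decomposeFin_symm_apply_zero, eq_comm]

theorem decomposeFin_symm_symm_apply_self_s16 (p : Fin (n + 1)) (e : Perm (Fin n)) :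
    (decomposeFin.symm (p, e)).symm p = 0 :=
  (decomposeFin_symm_symm_apply_eq_zero_iff_s16 e).mpr rfl

theorem decomposeFin_symm_symm_apply {p i : Fin (n + 1)} {k : Fin n} (e : Perm (Fin n))
    (hk : k.succ = swap 0 p i) :
    (decomposeFin.symm (p, e)).symm i = (e.symm k).succ := by
  rw [Equiv.symm_apply_eq, decomposeFin_symm_apply_succ, apply_symm_apply, hk, swap_apply_self]

end Equiv.Perm

section PlackettLuce

variable {n : ℕ}

/-- In `decomposeFin.symm (p, e)`, position `k` of the tail ranking `e` holds the item
`swap 0 p k.succ`. -/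
def tailLogits (θ : Fin (n + 1) → ℝ) (p : Fin (n + 1)) (k : Fin n) : ℝ :=
  θ (swap 0 p k.succ)

theorem plackettLuce_decomposeFin_symm_s16 (θ : Fin (n + 1) → ℝ) (p : Fin (n + 1))
    (e : Perm (Fin n)) :
    plackettLuce θ (decomposeFin.symm (p, e))
      = exp (θ p) / (∑ k, exp (θ k)) * plackettLuce (tailLogits θ p) e := by
  rw [plackettLuce, Fin.prod_univ_succ]
  congr 1
  · simp only [Fin.zero_le, filter_true, decomposeFin_symm_apply_zero]
    rw [Equiv.sum_comp (decomposeFin.symm (p, e)) (fun k => exp (θ k))]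
  · refine prod_congr rfl fun k _ => ?_
    simp [Fin.sum_filter_succ_le, decomposeFin_symm_apply_succ, tailLogits]

theorem sum_filter_plackettLuce (θ : Fin (n + 1) → ℝ) (P : Perm (Fin (n + 1)) → Prop)
    [DecidablePred P] :
    ∑ π ∈ univ.filter P, plackettLuce θ π
      = ∑ p, exp (θ p) / (∑ k, exp (θ k)) *
          ∑ e ∈ univ.filter (fun e => P (decomposeFin.symm (p, e))),
            plackettLuce (tailLogits θ p) e := by
  rw [sum_filter, ← Equiv.sum_comp decomposeFin.symm, Fintype.sum_prod_type]
  simp only [plackettLuce_decomposeFin_symm_s16, mul_sum, sum_filter, mul_ite, mul_zero]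

theorem sum_filter_first_plackettLuce (θ : Fin (n + 1) → ℝ) (q : Fin (n + 1) → Prop)
    [DecidablePred q] (P : Perm (Fin (n + 1)) → Prop) [DecidablePred P] :
    ∑ π ∈ univ.filter (fun π => q (π 0) ∧ P π), plackettLuce θ π
      = ∑ p ∈ univ.filter q, exp (θ p) / (∑ k, exp (θ k)) *
          ∑ e ∈ univ.filter (fun e => P (decomposeFin.symm (p, e))),
            plackettLuce (tailLogits θ p) e := by
  rw [sum_filter_plackettLuce, sum_filter]
  refine sum_congr rfl fun p _ => ?_
  by_cases hq : q p <;> simp [hq, decomposeFin_symm_apply_zero]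

/-- Relabelling the tail items turns the order of `i`, `j` under `decomposeFin.symm (p, e)`
into the order of their tail indices under `e`, so the pairwise law for `n` items applies. -/
theorem sum_filter_precedes_decomposeFin_symm
    (h : ∀ (θ' : Fin n → ℝ) (i' j' : Fin n), i' ≠ j' →
      ∑ e ∈ univ.filter (fun e : Perm (Fin n) => e.symm i' < e.symm j'), plackettLuce θ' e
        = exp (θ' i') / (exp (θ' i') + exp (θ' j')))
    (θ : Fin (n + 1) → ℝ) {p i j : Fin (n + 1)} (hip : i ≠ p) (hjp : j ≠ p) (hij : i ≠ j) :
    ∑ e ∈ univ.filter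
        (fun e => (decomposeFin.symm (p, e)).symm i < (decomposeFin.symm (p, e)).symm j),
        plackettLuce (tailLogits θ p) e
      = exp (θ i) / (exp (θ i) + exp (θ j)) := by
  have hne : ∀ {x}, x ≠ p → swap 0 p x ≠ 0 := fun hx => by
    rwa [Ne, swap_apply_eq_iff, swap_apply_left]
  obtain ⟨i', hi'⟩ := Fin.exists_succ_eq.mpr (hne hip)
  obtain ⟨j', hj'⟩ := Fin.exists_succ_eq.mpr (hne hjp)
  have hθ : ∀ {k x}, k.succ = swap 0 p x → tailLogits θ p k = θ x := fun hk => by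
    rw [tailLogits, hk, swap_apply_self]
  have hij' : i' ≠ j' := by
    rintro rfl
    exact hij ((swap 0 p).injective (hi'.symm.trans hj'))
  simp only [decomposeFin_symm_symm_apply _ hi', decomposeFin_symm_symm_apply _ hj',
    Fin.succ_lt_succ_iff]
  rw [h _ i' j' hij', hθ hi', hθ hj']

theorem sum_plackettLuce_precedes (θ : Fin n → ℝ) {i j : Fin n} (hij : i ≠ j) :
    ∑ π ∈ univ.filter (fun π : Perm (Fin n) => π.symm i < π.symm j), plackettLuce θ π
      = exp (θ i) / (exp (θ i) + exp (θ j)) := by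
  induction n with
  | zero => exact i.elim0
  | succ n ih =>
    set Z := ∑ k, exp (θ k)
    set B := exp (θ i) / (exp (θ i) + exp (θ j))
    have hinner : ∀ p, ∑ e ∈ univ.filter (fun e => (decomposeFin.symm (p, e)).symm i
        < (decomposeFin.symm (p, e)).symm j), plackettLuce (tailLogits θ p) e
          = if p = i then 1 else if p = j then 0 else B := by
      intro p
      split_ifs with hpi hpj
      · subst hpi
        simp [decomposeFin_symm_symm_apply_self_s16, Fin.pos_iff_ne_zero,
          decomposeFin_symm_symm_apply_eq_zero_iff_s16, hij.symm, sum_plackettLuce]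
      · subst hpj
        simp [decomposeFin_symm_symm_apply_self_s16]
      · exact sum_filter_precedes_decomposeFin_symm (fun θ' _ _ => ih θ') θ
          (Ne.symm hpi) (Ne.symm hpj) hij
    rw [sum_filter_plackettLuce]
    simp only [hinner]
    set g := fun p => exp (θ p) / Z * (if p = i then 1 else if p = j then 0 else B)
    have htotal : ∑ p, g p = g i + g j + ∑ p ∈ univ.filter (fun p => p ≠ i ∧ p ≠ j), g p := by
      rw [sum_filter_ne_and_ne hij]; abel
    have hrest : ∑ p ∈ univ.filter (fun p => p ≠ i ∧ p ≠ j), g p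
        = (Z - exp (θ i) - exp (θ j)) / Z * B := by
      rw [← sum_filter_ne_and_ne hij, sum_div, sum_mul]
      refine sum_congr rfl fun p hp => ?_
      rw [mem_filter] at hp
      simp only [g, if_neg hp.2.1, if_neg hp.2.2]
    have hZ : 0 < Z := sum_pos (fun k _ => exp_pos _) univ_nonempty
    have hij_pos : 0 < exp (θ i) + exp (θ j) := by positivity
    rw [htotal, hrest]
    simp only [g, B, if_neg hij.symm, ite_true]
    field_simp
    ring

end PlackettLuce

/-- Conditioned on the first-ranked item `π_1` being neither `i` nor `j`, the
probability that `i` precedes `j` equals `e^{θ_i}/(e^{θ_i}+e^{θ_j})`; stated in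
product form, `Pr(π_1 ∉ {i,j} ∧ i ≺ j) = Pr(π_1 ∉ {i,j}) · e^{θ_i}/(e^{θ_i}+e^{θ_j})`.
Moreover `Pr(π_1 ∉ {i,j}) = (Z − e^{θ_i} − e^{θ_j})/Z` with `Z = Σ_k e^{θ_k}`. -/
theorem plackettLuce_precedes_given_first_not_ij {n : ℕ} (hn : 2 ≤ n)
    (θ : Fin n → ℝ) (i j : Fin n) (hij : i ≠ j) :
    (∑ π ∈ Finset.univ.filter
        (fun π : Equiv.Perm (Fin n) =>
          π ⟨0, by omega⟩ ≠ i ∧ π ⟨0, by omega⟩ ≠ j ∧ π.symm i < π.symm j),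
        plackettLuce θ π)
      = (∑ π ∈ Finset.univ.filter
          (fun π : Equiv.Perm (Fin n) => π ⟨0, by omega⟩ ≠ i ∧ π ⟨0, by omega⟩ ≠ j),
          plackettLuce θ π)
        * (Real.exp (θ i) / (Real.exp (θ i) + Real.exp (θ j)))
    ∧ (∑ π ∈ Finset.univ.filter
          (fun π : Equiv.Perm (Fin n) => π ⟨0, by omega⟩ ≠ i ∧ π ⟨0, by omega⟩ ≠ j),
          plackettLuce θ π)
      = ((∑ k : Fin n, Real.exp (θ k)) - Real.exp (θ i) - Real.exp (θ j))
          / ∑ k : Fin n, Real.exp (θ k) := by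
  obtain ⟨m, rfl⟩ : ∃ m, n = m + 1 := ⟨n - 1, by omega⟩
  have hfirst : ∑ π ∈ univ.filter (fun π : Perm (Fin (m + 1)) => π 0 ≠ i ∧ π 0 ≠ j),
      plackettLuce θ π = ((∑ k, exp (θ k)) - exp (θ i) - exp (θ j)) / ∑ k, exp (θ k) := by
    rw [← sum_filter_ne_and_ne hij, sum_div]
    simpa [sum_plackettLuce] using
      sum_filter_first_plackettLuce θ (fun p => p ≠ i ∧ p ≠ j) (fun _ => True)
  have hprecedes : ∑ π ∈ univ.filter (fun π : Perm (Fin (m + 1)) =>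
      π 0 ≠ i ∧ π 0 ≠ j ∧ π.symm i < π.symm j), plackettLuce θ π
        = ((∑ k, exp (θ k)) - exp (θ i) - exp (θ j)) / (∑ k, exp (θ k))
            * (exp (θ i) / (exp (θ i) + exp (θ j))) := by
    simp_rw [← and_assoc]
    rw [sum_filter_first_plackettLuce θ (fun p => p ≠ i ∧ p ≠ j), ← sum_filter_ne_and_ne hij,
      sum_div, sum_mul]
    refine sum_congr rfl fun p hp => ?_
    rw [mem_filter] at hp
    rw [sum_filter_precedes_decomposeFin_symm (fun θ' _ _ => sum_plackettLuce_precedes θ') θ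
      (Ne.symm hp.2.1) (Ne.symm hp.2.2) hij]
  rw [← hfirst] at hprecedes
  exact ⟨hprecedes, hfirst⟩
end
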